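/- The sequence of divided-difference conditions characterizing quasifiniteness in the minus case is equivalent to an ODE: for ξ a linear functional with values Δ_n = -ξ(D^n) (n odd), c = ξ(C), set H(x) = 2Δ⁻(x)sinh(x/2) + c·cosh(x/2) where Δ⁻(x) = Σ_{n odd} Δ_n x^n/n!. Then for an even polynomial b(w) = Σ_{n=0}^M β_n w^{2n}, the conditions ξ((D-1/2)^{2l}b(D-1/2) - (D+1/2)^{2l}b(D+1/2) + (-1/2)^{2l}b(-1/2)C) = 0 for all l ∈ ℤ≥0 hold if and only if (Σ_{n=0}^M β_n (d²/dx²)^n) H(x) = 0 as formal power series. -/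

import Mathlib

open PowerSeries

/-- `ξ(p(D))` for a functional with `ξ(D^n) = -Δ_n`: expand `p` and apply linearly. -/
noncomputable def xiEval (Δ : ℕ → ℂ) (p : Polynomial ℂ) : ℂ :=
  -(p.sum fun n a => a * Δ n)

/-- Formal differentiation of power series over ℂ. -/
noncomputable def der : ℂ⟦X⟧ → ℂ⟦X⟧ := fun F => PowerSeries.derivative ℂ F

/-- `sinh(x/2)` as a formal power series. -/
noncomputable def sh2 : ℂ⟦X⟧ :=
  ((1 : ℂ) / 2) • (rescale ((1 : ℂ) / 2) (exp ℂ) - rescale (-(1 : ℂ) / 2) (exp ℂ))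

/-- `cosh(x/2)` as a formal power series. -/
noncomputable def ch2 : ℂ⟦X⟧ :=
  ((1 : ℂ) / 2) • (rescale ((1 : ℂ) / 2) (exp ℂ) + rescale (-(1 : ℂ) / 2) (exp ℂ))

/-- `Δ⁻(x) = Σ_{n odd} Δ_n x^n/n!`. -/
noncomputable def DeltaSeries (Δ : ℕ → ℂ) : ℂ⟦X⟧ :=
  PowerSeries.mk fun n => if Odd n then Δ n / (n.factorial : ℂ) else 0

namespace QFaux

open Finset Polynomial

noncomputable def Gc (Δ : ℕ → ℂ) (c : ℂ) (m : ℕ) : ℂ :=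
  (∑ j ∈ Finset.range (m+1), if Odd j ∧ Odd (m - j) then
      2 * (Δ j / (j.factorial : ℂ)) * (((1:ℂ)/2)^(m-j) / ((m-j).factorial : ℂ)) else 0)
  + (if Even m then c * ((1:ℂ)/2)^m / (m.factorial : ℂ) else 0)

lemma coeff_sh2 (n : ℕ) :
    coeff n sh2 = if Odd n then ((1:ℂ)/2)^n / (n.factorial : ℂ) else 0 := by
  have h2 : (-(1:ℂ)/2) = -((1:ℂ)/2) := by ring
  simp only [sh2, map_smul, map_sub, coeff_rescale, coeff_exp, smul_eq_mul, h2]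
  rcases Nat.even_or_odd n with h | h
  · rw [if_neg (by simpa using h), h.neg_pow]
    ring
  · rw [if_pos h, h.neg_pow]
    have : (algebraMap ℚ ℂ) (1 / (n.factorial : ℚ)) = 1 / (n.factorial : ℂ) := by
      push_cast; simp
    rw [this]; ring

lemma coeff_ch2 (n : ℕ) :
    coeff n ch2 = if Even n then ((1:ℂ)/2)^n / (n.factorial : ℂ) else 0 := by
  have h2 : (-(1:ℂ)/2) = -((1:ℂ)/2) := by ring
  simp only [ch2, map_smul, map_add, coeff_rescale, coeff_exp, smul_eq_mul, h2]
  rcases Nat.even_or_odd n with h | h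
  · rw [if_pos h, h.neg_pow]
    have : (algebraMap ℚ ℂ) (1 / (n.factorial : ℚ)) = 1 / (n.factorial : ℂ) := by
      push_cast; simp
    rw [this]; ring
  · rw [if_neg (by simpa using h), h.neg_pow]
    ring

lemma coeff_H (Δ : ℕ → ℂ) (c : ℂ) (m : ℕ) :
    coeff m ((2 : ℂ) • DeltaSeries Δ * sh2 + c • ch2) = Gc Δ c m := by
  rw [map_add, PowerSeries.coeff_mul, Finset.Nat.sum_antidiagonal_eq_sum_range_succ_mk]
  simp only [map_smul, smul_eq_mul, coeff_sh2, coeff_ch2, DeltaSeries, coeff_mk, Gc]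
  congr 1
  · refine Finset.sum_congr rfl fun j _ => ?_
    rcases Classical.em (Odd j) with hj | hj <;> rcases Classical.em (Odd (m - j)) with hk | hk <;>
      simp [hj, hk] <;> ring
  · rcases Classical.em (Even m) with h | h <;> simp [h] <;> ring

lemma Gc_odd (Δ : ℕ → ℂ) (c : ℂ) (m : ℕ) (hm : Odd m) : Gc Δ c m = 0 := by
  rw [Gc, if_neg (by simpa using hm), add_zero]
  refine Finset.sum_eq_zero fun j hj => ?_
  rw [if_neg]
  rintro ⟨h1, h2⟩
  have hjm : j ≤ m := by simpa using Nat.lt_succ_iff.mp (Finset.mem_range.mp hj)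
  have : Even (j + (m - j)) := h1.add_odd h2
  rw [Nat.add_sub_cancel' hjm] at this
  exact (Nat.not_even_iff_odd.mpr hm) this

lemma coeff_iter_der (m : ℕ) : ∀ (F : ℂ⟦X⟧) (k : ℕ),
    coeff k (der^[m] F) = (((k+m).factorial : ℂ) / (k.factorial : ℂ)) * coeff (k+m) F := by
  induction m with
  | zero =>
    intro F k
    simp [div_self (Nat.cast_ne_zero.mpr k.factorial_ne_zero : ((k.factorial : ℂ)) ≠ 0)]
  | succ m ih =>
    intro F k
    rw [Function.iterate_succ_apply, ih (der F) k, show der F = PowerSeries.derivative ℂ F from rfl,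
      PowerSeries.coeff_derivative]
    have : k + (m+1) = (k + m) + 1 := by omega
    rw [this, Nat.factorial_succ]
    push_cast
    ring

/-- value of the linear functional on `(X + C y)^m`. -/
noncomputable def xiL (Δ : ℕ → ℂ) : Polynomial ℂ →ₗ[ℂ] ℂ :=
  Polynomial.lsum (fun n => LinearMap.id.smulRight (Δ n))

lemma xiEval_eq (Δ : ℕ → ℂ) (p : Polynomial ℂ) : xiEval Δ p = -(xiL Δ p) := by
  simp [xiEval, xiL, Polynomial.lsum_apply, smul_eq_mul]

lemma xiL_monomial (Δ : ℕ → ℂ) (n : ℕ) (r : ℂ) : xiL Δ (Polynomial.monomial n r) = r * Δ n := by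
  simp [xiL, Polynomial.lsum_apply, Polynomial.sum_monomial_index, smul_eq_mul]

lemma xiL_add_pow (Δ : ℕ → ℂ) (y : ℂ) (m : ℕ) :
    xiL Δ ((Polynomial.X + Polynomial.C y)^m)
      = ∑ j ∈ Finset.range (m+1), (m.choose j : ℂ) * y^(m-j) * Δ j := by
  rw [add_pow, map_sum]
  refine Finset.sum_congr rfl fun j _ => ?_
  have : (Polynomial.X : Polynomial ℂ)^j * Polynomial.C y^(m-j) * (m.choose j : Polynomial ℂ)
      = Polynomial.monomial j ((m.choose j : ℂ) * y^(m-j)) := by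
    rw [← Polynomial.C_pow, ← Polynomial.C_eq_natCast, ← Polynomial.C_mul_X_pow_eq_monomial, Polynomial.C_mul]
    ring
  rw [this, xiL_monomial]

lemma xiL_sub_pow (Δ : ℕ → ℂ) (y : ℂ) (m : ℕ) :
    xiL Δ ((Polynomial.X - Polynomial.C y)^m)
      = ∑ j ∈ Finset.range (m+1), (m.choose j : ℂ) * (-y)^(m-j) * Δ j := by
  rw [sub_eq_add_neg, ← map_neg Polynomial.C, xiL_add_pow]

lemma fact_Gc (Δ : ℕ → ℂ) (c : ℂ) (m : ℕ) (hm : Even m) :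
    (m.factorial : ℂ) * Gc Δ c m
      = (∑ j ∈ Finset.range (m+1), if Odd j then
          2 * (m.choose j : ℂ) * ((1:ℂ)/2)^(m-j) * Δ j else 0) + c * ((1:ℂ)/2)^m := by
  have hf : ∀ i : ℕ, ((i.factorial : ℂ)) ≠ 0 := fun i => Nat.cast_ne_zero.mpr i.factorial_ne_zero
  rw [Gc, if_pos hm, mul_add, Finset.mul_sum]
  congr 1
  · refine Finset.sum_congr rfl fun j hj => ?_
    have hjm : j ≤ m := Nat.lt_succ_iff.mp (Finset.mem_range.mp hj)
    have hpar : Odd (m - j) ↔ Odd j := by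
      rw [← Nat.not_even_iff_odd, ← Nat.not_even_iff_odd, Nat.even_sub hjm]
      simp [hm]
    rcases Classical.em (Odd j) with h | h
    · rw [if_pos ⟨h, hpar.mpr h⟩, if_pos h, Nat.cast_choose ℂ hjm]
      field_simp
    · rw [if_neg (fun hh => h hh.1), if_neg h, mul_zero]
  · rw [mul_comm ((m.factorial : ℂ)) _, div_mul_cancel₀ _ (hf m)]

lemma lhs_eq (Δ : ℕ → ℂ) (c : ℂ) (M : ℕ) (β : ℕ → ℂ) (l : ℕ) :
    xiEval Δ ((Polynomial.X - Polynomial.C ((1 : ℂ) / 2)) ^ (2 * l) *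
          (∑ n ∈ Finset.range (M + 1), Polynomial.C (β n) * Polynomial.X ^ (2 * n)).comp
            (Polynomial.X - Polynomial.C ((1 : ℂ) / 2)) -
        (Polynomial.X + Polynomial.C ((1 : ℂ) / 2)) ^ (2 * l) *
          (∑ n ∈ Finset.range (M + 1), Polynomial.C (β n) * Polynomial.X ^ (2 * n)).comp
            (Polynomial.X + Polynomial.C ((1 : ℂ) / 2))) +
      (-(1 : ℂ) / 2) ^ (2 * l) *
        (∑ n ∈ Finset.range (M + 1), Polynomial.C (β n) * Polynomial.X ^ (2 * n)).eval
          (-(1 : ℂ) / 2) * c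
    = ∑ n ∈ Finset.range (M + 1), β n * (((2*l+2*n).factorial : ℂ)) * Gc Δ c (2*l+2*n) := by
  set a : ℂ := (1:ℂ)/2 with ha
  have hna : (-(1:ℂ)/2) = -a := by rw [ha]; ring
  have hcomp : ∀ q : Polynomial ℂ,
      (∑ n ∈ Finset.range (M + 1), Polynomial.C (β n) * Polynomial.X ^ (2 * n)).comp q
        = ∑ n ∈ Finset.range (M + 1), Polynomial.C (β n) * q ^ (2 * n) := by
    intro q
    simp [Polynomial.comp, Polynomial.eval₂_finset_sum]
  rw [hcomp, hcomp, Finset.mul_sum, Finset.mul_sum, ← Finset.sum_sub_distrib]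
  have key : ∀ n : ℕ,
      (Polynomial.X - Polynomial.C a) ^ (2*l) * (Polynomial.C (β n) * (Polynomial.X - Polynomial.C a) ^ (2*n))
        - (Polynomial.X + Polynomial.C a) ^ (2*l) * (Polynomial.C (β n) * (Polynomial.X + Polynomial.C a) ^ (2*n))
      = β n • ((Polynomial.X - Polynomial.C a) ^ (2*l+2*n) - (Polynomial.X + Polynomial.C a) ^ (2*l+2*n)) := by
    intro n
    rw [Polynomial.smul_eq_C_mul, pow_add, pow_add]
    ring
  simp_rw [key]
  rw [xiEval_eq, map_sum, hna]
  simp_rw [map_smul, map_sub, xiL_sub_pow, xiL_add_pow, smul_eq_mul]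
  rw [Polynomial.eval_finset_sum, ← neg_one_mul, Finset.mul_sum]
  simp only [Polynomial.eval_mul, Polynomial.eval_C, Polynomial.eval_pow, Polynomial.eval_X]
  have hevpow : ∀ m : ℕ, (-a) ^ (2*m) = a ^ (2*m) := fun m => (Even.neg_pow ⟨m, by ring⟩ a)
  rw [hevpow l, Finset.mul_sum, Finset.sum_mul, ← Finset.sum_add_distrib]
  refine Finset.sum_congr rfl fun n _ => ?_
  have hev : Even (2*l+2*n) := ⟨l+n, by ring⟩
  conv_rhs => rw [mul_assoc, fact_Gc Δ c _ hev]
  rw [hevpow n]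
  set m := 2*l+2*n with hm
  have hsum : (∑ j ∈ Finset.range (m+1), (m.choose j : ℂ) * a^(m-j) * Δ j)
      - (∑ j ∈ Finset.range (m+1), (m.choose j : ℂ) * (-a)^(m-j) * Δ j)
      = ∑ j ∈ Finset.range (m+1), (if Odd j then 2 * (m.choose j : ℂ) * a^(m-j) * Δ j else 0) := by
    rw [← Finset.sum_sub_distrib]
    refine Finset.sum_congr rfl fun j hj => ?_
    have hjm : j ≤ m := Nat.lt_succ_iff.mp (Finset.mem_range.mp hj)
    have hpar : Odd (m - j) ↔ Odd j := by
      rw [← Nat.not_even_iff_odd, ← Nat.not_even_iff_odd, Nat.even_sub hjm]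
      simp [hev]
    rcases Classical.em (Odd j) with h | h
    · rw [if_pos h, (hpar.mpr h).neg_pow]
      ring
    · rw [if_neg h]
      have : Even (m - j) := Nat.not_odd_iff_even.mp (fun hh => h (hpar.mp hh))
      rw [this.neg_pow]
      ring
  have goal2 : -1 * (β n * ((∑ j ∈ Finset.range (m+1), (m.choose j : ℂ) * (-a)^(m-j) * Δ j)
        - ∑ j ∈ Finset.range (m+1), (m.choose j : ℂ) * a^(m-j) * Δ j))
      + a ^ (2*l) * (β n * a ^ (2*n)) * c
      = β n * ((∑ j ∈ Finset.range (m+1), (if Odd j then 2 * (m.choose j : ℂ) * a^(m-j) * Δ j else 0))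
          + c * a ^ m) := by
    rw [← hsum, hm, pow_add]
    ring
  exact goal2

end QFaux

/-- with `H(x) = 2Δ⁻(x)sinh(x/2) + c·cosh(x/2)` and the even polynomial
`b(w) = Σ_{n≤M} β_n w^{2n}`, the conditions
`ξ((D-1/2)^{2l} b(D-1/2) - (D+1/2)^{2l} b(D+1/2) + (-1/2)^{2l} b(-1/2) C) = 0` for all
`l ≥ 0` hold iff `(Σ_{n≤M} β_n (d²/dx²)^n) H = 0` as formal power series. -/
theorem quasifiniteness_conditions_iff_ODE
    (Δ : ℕ → ℂ) (c : ℂ) (M : ℕ) (β : ℕ → ℂ) (b : Polynomial ℂ)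
    (hb : b = ∑ n ∈ Finset.range (M + 1), Polynomial.C (β n) * Polynomial.X ^ (2 * n)) :
    (∀ l : ℕ,
      xiEval Δ ((Polynomial.X - Polynomial.C ((1 : ℂ) / 2)) ^ (2 * l) * b.comp (Polynomial.X - Polynomial.C ((1 : ℂ) / 2)) -
          (Polynomial.X + Polynomial.C ((1 : ℂ) / 2)) ^ (2 * l) * b.comp (Polynomial.X + Polynomial.C ((1 : ℂ) / 2))) +
        (-(1 : ℂ) / 2) ^ (2 * l) * b.eval (-(1 : ℂ) / 2) * c = 0) ↔
    (∑ n ∈ Finset.range (M + 1),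
        β n • der^[2 * n] ((2 : ℂ) • DeltaSeries Δ * sh2 + c • ch2)) = 0 := by
  classical
  subst hb
  set S : ℕ → ℂ := fun k => ∑ n ∈ Finset.range (M+1),
    β n * (((k+2*n).factorial : ℂ)) * QFaux.Gc Δ c (k+2*n) with hSdef
  have step1 : (∀ l : ℕ,
      xiEval Δ ((Polynomial.X - Polynomial.C ((1 : ℂ) / 2)) ^ (2 * l) *
            ((∑ n ∈ Finset.range (M + 1), Polynomial.C (β n) * Polynomial.X ^ (2 * n)).comp
              (Polynomial.X - Polynomial.C ((1 : ℂ) / 2))) -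
          (Polynomial.X + Polynomial.C ((1 : ℂ) / 2)) ^ (2 * l) *
            ((∑ n ∈ Finset.range (M + 1), Polynomial.C (β n) * Polynomial.X ^ (2 * n)).comp
              (Polynomial.X + Polynomial.C ((1 : ℂ) / 2)))) +
        (-(1 : ℂ) / 2) ^ (2 * l) *
          ((∑ n ∈ Finset.range (M + 1), Polynomial.C (β n) * Polynomial.X ^ (2 * n)).eval
            (-(1 : ℂ) / 2)) * c = 0) ↔ (∀ l : ℕ, S (2*l) = 0) := by
    refine forall_congr' fun l => ?_
    rw [QFaux.lhs_eq Δ c M β l, hSdef]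
  have step2 : (∀ l : ℕ, S (2*l) = 0) ↔ (∀ k : ℕ, S k = 0) := by
    constructor
    · intro h k
      rcases Nat.even_or_odd k with ⟨l, hl⟩ | hk
      · have : k = 2 * l := by omega
        rw [this]; exact h l
      · rw [hSdef]
        refine Finset.sum_eq_zero fun n _ => ?_
        rw [QFaux.Gc_odd Δ c _ (by rcases hk with ⟨t, ht⟩; exact ⟨t + n, by omega⟩), mul_zero]
    · intro h l; exact h (2*l)
  have hcoeff : ∀ k : ℕ, coeff k (∑ n ∈ Finset.range (M + 1),
      β n • der^[2 * n] ((2 : ℂ) • DeltaSeries Δ * sh2 + c • ch2))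
      = (1 / (k.factorial : ℂ)) * S k := by
    intro k
    rw [map_sum, hSdef, Finset.mul_sum]
    refine Finset.sum_congr rfl fun n _ => ?_
    rw [map_smul, smul_eq_mul, QFaux.coeff_iter_der, QFaux.coeff_H]
    ring
  have step3 : (∀ k : ℕ, S k = 0) ↔ (∑ n ∈ Finset.range (M + 1),
      β n • der^[2 * n] ((2 : ℂ) • DeltaSeries Δ * sh2 + c • ch2)) = 0 := by
    rw [PowerSeries.ext_iff]
    refine forall_congr' fun k => ?_
    rw [hcoeff k, map_zero]
    have hk : (1 / (k.factorial : ℂ)) ≠ 0 := by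
      simp [Nat.factorial_ne_zero]
    constructor
    · intro h; rw [h, mul_zero]
    · intro h; exact (mul_eq_zero.mp h).resolve_left hk
  rw [step1, step2, step3]
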